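/- Let X be a reflexive real Banach space and Φ, Ψ : X → ℝ Gâteaux differentiable functionals such that Φ is strongly continuous, sequentially weakly lower semicontinuous and coercive, and Ψ is sequentially weakly upper semicontinuous. For r > inf_X Φ set φ(r) = inf over u ∈ Φ^{−1}((−∞,r)) of (sup{Ψ(v) : v ∈ Φ^{−1}((−∞,r))} − Ψ(u))/(r − Φ(u)). Then for every r > inf_X Φ and every λ ∈ (0, 1/φ(r)), the restriction of J_λ = Φ − λΨ to Φ^{−1}((−∞,r)) admits a global minimum, which is a critical point (local minimum) of J_λ in X. -/

import Mathlib

noncomputable section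
open Filter Set
open scoped Topology

/-- `J` has Gâteaux derivative `J'` at `u`: for every direction `v`, the difference quotients
`(J(u + t•v) - J(u))/t` converge to `J'(v)` as `t → 0`, `t ≠ 0`. -/
def HasGateauxDerivAt {X : Type} [NormedAddCommGroup X] [NormedSpace ℝ X]
    (J : X → ℝ) (J' : X →L[ℝ] ℝ) (u : X) : Prop :=
  ∀ v : X, Tendsto (fun t : ℝ => (J (u + t • v) - J u) / t)
    (nhdsWithin 0 {(0:ℝ)}ᶜ) (nhds (J' v))

/-- A sequence `x` converges weakly to `u`. -/
def WeakSeqConv {X : Type} [NormedAddCommGroup X] [NormedSpace ℝ X]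
    (x : ℕ → X) (u : X) : Prop :=
  ∀ ℓ : StrongDual ℝ X, Tendsto (fun n => ℓ (x n)) atTop (nhds (ℓ u))

/-!
Coercivity makes the sublevel set `S = Φ⁻¹(-∞, r)` bounded, and in a reflexive space bounded
sequences have weakly convergent subsequences: the closed span of the sequence is separable and
reflexive, so its dual is separable, and sequential Banach–Alaoglu applies in its bidual.
The condition `λ < 1/φ(r)` provides `u₀ ∈ S` with `Φ u₀ - λ Ψ u₀ < r - λ sup_S Ψ`.
A minimising sequence of `J_λ = Φ - λΨ` on `S` has a weak limit `u`, and the semicontinuity of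
`Φ` and `Ψ` gives `J_λ u ≤ inf_S J_λ`; if `Φ u ≥ r`, the same limits would give
`inf_S J_λ ≥ r - λ sup_S Ψ > J_λ u₀`. So `u ∈ S`, which is open, `u` is a local minimum of
`J_λ`, and its Gâteaux derivative `Φ' u - λ Ψ' u` vanishes.
-/

open NormedSpace TopologicalSpace Bornology

theorem Submodule.exists_strongDual_apply_ne_zero_of_notMem {E : Type*} [NormedAddCommGroup E]
    [NormedSpace ℝ E] {p : Submodule ℝ E} (hp : IsClosed (p : Set E)) {x : E} (hx : x ∉ p) :
    ∃ f : StrongDual ℝ E, f x ≠ 0 ∧ ∀ y ∈ p, f y = 0 := by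
  have : IsClosed (p : Set E) := hp
  have hx' : ‖p.mkQ x‖ ≠ 0 :=
    mt (QuotientAddGroup.norm_mk_eq_zero (S := p.toAddSubgroup)).mp hx
  obtain ⟨g, -, hg⟩ := exists_dual_vector ℝ (p.mkQ x) hx'
  refine ⟨g.comp p.mkQL, ?_, fun y hy => ?_⟩
  · change g (p.mkQ x) ≠ 0
    rwa [hg]
  · simp [(Submodule.Quotient.mk_eq_zero p).mpr hy]

theorem separableSpace_of_separableSpace_strongDual (E : Type*) [NormedAddCommGroup E]
    [NormedSpace ℝ E] [SeparableSpace (StrongDual ℝ E)] : SeparableSpace E := by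
  have hnorming : ∀ f : StrongDual ℝ E, ∃ x : E, ‖x‖ ≤ 1 ∧ ‖f‖ ≤ 2 * ‖f x‖ := by
    intro f
    rcases eq_or_ne f 0 with rfl | hf
    · exact ⟨0, by simp⟩
    obtain ⟨x, hx, hfx⟩ := f.exists_lt_apply_of_lt_opNorm
      (half_lt_self (norm_pos_iff.mpr hf))
    exact ⟨x, hx.le, by linarith⟩
  choose x hx hfx using hnorming
  obtain ⟨D, hDc, hDd⟩ := exists_countable_dense (StrongDual ℝ E)
  set Z := (Submodule.span ℝ (x '' D)).topologicalClosure
  -- A unit functional vanishing on `Z` is `1/4`-close to some `g ∈ D`, which `x g` almost norms.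
  have hZ : ∀ z, z ∈ Z := by
    by_contra! ⟨z, hz⟩
    obtain ⟨f, hfz, hfZ⟩ := Z.exists_strongDual_apply_ne_zero_of_notMem
      (Submodule.isClosed_topologicalClosure _) hz
    set G := ‖f‖⁻¹ • f
    have hG : ‖G‖ = 1 := norm_smul_inv_norm (by rintro rfl; simp at hfz)
    obtain ⟨g, hgG, hgD⟩ := Metric.dense_iff.mp hDd G (1 / 4) (by norm_num)
    rw [Metric.mem_ball, dist_eq_norm] at hgG
    have hGx : G (x g) = 0 := by
      have hxZ : x g ∈ Z := Submodule.le_topologicalClosure _ (Submodule.subset_span ⟨g, hgD, rfl⟩)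
      simp [G, hfZ _ hxZ]
    have : ‖g (x g)‖ ≤ 1 / 4 := calc
      ‖g (x g)‖ = ‖(g - G) (x g)‖ := by simp [hGx]
      _ ≤ ‖g - G‖ * ‖x g‖ := (g - G).le_opNorm _
      _ ≤ 1 / 4 * 1 := by gcongr; exact hx g
      _ = 1 / 4 := mul_one _
    have := norm_sub_norm_le G g
    rw [norm_sub_rev] at this
    linarith [hfx g]
  have : (Z : Set E) = univ := eq_univ_of_forall hZ
  refine isSeparable_univ_iff.mp (this ▸ ?_)
  rw [Submodule.topologicalClosure_coe]
  exact ((hDc.image x).isSeparable.span).closure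

theorem Submodule.surjective_inclusionInDoubleDual {E : Type*} [NormedAddCommGroup E]
    [NormedSpace ℝ E] (hE : Function.Surjective (inclusionInDoubleDual ℝ E))
    {p : Submodule ℝ E} (hp : IsClosed (p : Set E)) :
    Function.Surjective (inclusionInDoubleDual ℝ p) := by
  intro φ
  set R : StrongDual ℝ E →L[ℝ] StrongDual ℝ p :=
    (ContinuousLinearMap.compL ℝ p E ℝ).flip p.subtypeL
  obtain ⟨x, hx⟩ := hE (φ.comp R)
  have hφ : ∀ f : StrongDual ℝ E, f x = φ (R f) := fun f => congr($hx f)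
  have hxp : x ∈ p := by
    by_contra hxp
    obtain ⟨f, hfx, hfp⟩ := p.exists_strongDual_apply_ne_zero_of_notMem hp hxp
    have hRf : R f = 0 := by ext y; exact hfp y y.2
    exact hfx (by rw [hφ, hRf, map_zero])
  refine ⟨⟨x, hxp⟩, ContinuousLinearMap.ext fun ℓ => ?_⟩
  obtain ⟨g, hg, -⟩ := exists_extension_norm_eq p ℓ
  have hRg : R g = ℓ := by ext y; exact hg y
  rw [dual_def, ← hRg, ← hφ]
  rfl

theorem exists_weakSeqConv_subseq_of_separableSpace_strongDual {E : Type}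
    [NormedAddCommGroup E] [NormedSpace ℝ E] [SeparableSpace (StrongDual ℝ E)]
    (hE : Function.Surjective (inclusionInDoubleDual ℝ E)) {x : ℕ → E} {C : ℝ}
    (hC : ∀ n, ‖x n‖ ≤ C) :
    ∃ (u : E) (g : ℕ → ℕ), StrictMono g ∧ WeakSeqConv (x ∘ g) u := by
  have hmem : ∀ n, StrongDual.toWeakDual (inclusionInDoubleDual ℝ E (x n)) ∈
      WeakDual.toStrongDual ⁻¹' Metric.closedBall 0 C := fun n =>
    mem_closedBall_zero_iff (E := StrongDual ℝ (StrongDual ℝ E)) |>.2 <|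
      (double_dual_bound ℝ E (x n)).trans (hC n)
  obtain ⟨Λ, -, g, hg, hΛ⟩ := WeakDual.isSeqCompact_closedBall ℝ (StrongDual ℝ E) 0 C hmem
  obtain ⟨u, hu⟩ := hE (WeakDual.toStrongDual Λ)
  exact ⟨u, g, hg, fun ℓ => congr($hu ℓ) ▸ ((WeakDual.eval_continuous ℓ).tendsto Λ).comp hΛ⟩

theorem exists_weakSeqConv_subseq {X : Type} [NormedAddCommGroup X] [NormedSpace ℝ X]
    (hX : Function.Surjective (inclusionInDoubleDual ℝ X)) {x : ℕ → X} {C : ℝ}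
    (hC : ∀ n, ‖x n‖ ≤ C) :
    ∃ (u : X) (g : ℕ → ℕ), StrictMono g ∧ WeakSeqConv (x ∘ g) u := by
  set Y := (Submodule.span ℝ (range x)).topologicalClosure
  have hxY : ∀ n, x n ∈ Y := fun n =>
    Submodule.le_topologicalClosure _ (Submodule.subset_span (mem_range_self n))
  have : SeparableSpace Y := by
    refine IsSeparable.separableSpace ?_
    rw [Submodule.topologicalClosure_coe]
    exact (countable_range x).isSeparable.span.closure
  have hYrefl := Y.surjective_inclusionInDoubleDual hX (Submodule.isClosed_topologicalClosure _)
  have : SeparableSpace (StrongDual ℝ (StrongDual ℝ Y)) :=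
    hYrefl.denseRange.separableSpace (inclusionInDoubleDual ℝ Y).continuous
  have := separableSpace_of_separableSpace_strongDual (StrongDual ℝ Y)
  obtain ⟨u, g, hg, hu⟩ := exists_weakSeqConv_subseq_of_separableSpace_strongDual hYrefl
    (x := fun n => ⟨x n, hxY n⟩) hC
  exact ⟨u, g, hg, fun ℓ => hu (ℓ.comp Y.subtypeL)⟩

section DirectMethod

variable {X : Type} [NormedAddCommGroup X] [NormedSpace ℝ X]

def SeqWeakLowerSemicontinuous (Φ : X → ℝ) : Prop :=
  ∀ (u : X) (x : ℕ → X), WeakSeqConv x u → Φ u ≤ atTop.liminf fun n => Φ (x n)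

def SeqWeakUpperSemicontinuous (Ψ : X → ℝ) : Prop :=
  ∀ (u : X) (x : ℕ → X), WeakSeqConv x u → (atTop.limsup fun n => Ψ (x n)) ≤ Ψ u

namespace WeakSeqConv

variable {x : ℕ → X} {u : X}

theorem comp_tendsto (hx : WeakSeqConv x u) {g : ℕ → ℕ} (hg : Tendsto g atTop atTop) :
    WeakSeqConv (x ∘ g) u :=
  fun ℓ => (hx ℓ).comp hg

theorem add_smul_sub (hx : WeakSeqConv x u) {t : ℕ → ℝ} (ht : ∀ n, t n ∈ Icc (0 : ℝ) 1) :
    WeakSeqConv (fun n => u + t n • (x n - u)) u := by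
  intro ℓ
  have hℓ : Tendsto (fun n => ℓ (x n) - ℓ u) atTop (𝓝 0) := by
    simpa using (hx ℓ).sub_const (ℓ u)
  have hbdd : ∀ n, ‖t n * (ℓ (x n) - ℓ u)‖ ≤ ‖ℓ (x n) - ℓ u‖ := fun n => by
    rw [norm_mul]
    exact mul_le_of_le_one_left (norm_nonneg _) (abs_le.2 ⟨by linarith [(ht n).1], (ht n).2⟩)
  simpa using
    tendsto_const_nhds.add (squeeze_zero_norm hbdd (tendsto_zero_iff_norm_tendsto_zero.1 hℓ))

variable {Φ : X → ℝ}

/-- On `ℝ`, the `liminf` of a sequence that is not bounded below is a junk value, so the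
hypothesis is applied instead to a sequence on which `Φ` is constantly `c`: points of the
segments `[u, x n]` given by the intermediate value theorem. -/
theorem eventually_lt (hΦ : Continuous Φ) (hΦw : SeqWeakLowerSemicontinuous Φ)
    (hx : WeakSeqConv x u) {c : ℝ} (hc : c < Φ u) : ∀ᶠ n in atTop, c < Φ (x n) := by
  by_contra h
  obtain ⟨g, hg, hgc⟩ :=
    extraction_of_frequently_atTop ((not_eventually.1 h).mono fun n hn => not_lt.1 hn)
  have hivt : ∀ n, ∃ t ∈ Icc (0 : ℝ) 1, Φ (u + t • (x (g n) - u)) = c := fun n =>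
    intermediate_value_Icc' zero_le_one (by fun_prop)
      ⟨by simpa using hgc n, by simpa using hc.le⟩
  choose t ht htc using hivt
  have := hΦw u _ ((hx.comp_tendsto hg.tendsto_atTop).add_smul_sub ht)
  simp only [Function.comp_apply, htc, liminf_const] at this
  linarith

theorem le_of_tendsto (hΦ : Continuous Φ) (hΦw : SeqWeakLowerSemicontinuous Φ)
    (hx : WeakSeqConv x u) {α : ℝ} (hα : Tendsto (fun n => Φ (x n)) atTop (𝓝 α)) : Φ u ≤ α :=
  le_of_forall_lt_imp_le_of_dense fun _ hc =>
    ge_of_tendsto hα ((hx.eventually_lt hΦ hΦw hc).mono fun _ => le_of_lt)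

end WeakSeqConv

theorem bddBelow_image_of_isBounded (hX : Function.Surjective (inclusionInDoubleDual ℝ X))
    {Φ : X → ℝ} (hΦ : Continuous Φ) (hΦw : SeqWeakLowerSemicontinuous Φ) {s : Set X}
    (hs : IsBounded s) : BddBelow (Φ '' s) := by
  by_contra h
  have : ∀ n : ℕ, ∃ v ∈ s, Φ v < -n := fun n => by simpa using not_bddBelow_iff.1 h (-n)
  choose x hxs hxΦ using this
  obtain ⟨C, hC⟩ := hs.exists_norm_le
  obtain ⟨u, g, hg, hu⟩ := exists_weakSeqConv_subseq hX fun n => hC _ (hxs n)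
  obtain ⟨N, hN⟩ := exists_nat_gt (1 - Φ u)
  obtain ⟨n, hnN, hn⟩ :=
    ((eventually_ge_atTop N).and (hu.eventually_lt hΦ hΦw (sub_one_lt (Φ u)))).exists
  have : (n : ℝ) ≤ g n := by exact_mod_cast hg.id_le n
  have : (N : ℝ) ≤ n := by exact_mod_cast hnN
  linarith [hxΦ (g n), show Φ u - 1 < Φ (x (g n)) from hn]

theorem exists_isMinOn_sub_mul_of_isBounded
    (hX : Function.Surjective (inclusionInDoubleDual ℝ X)) {Φ Ψ : X → ℝ} (hΦ : Continuous Φ)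
    (hΦw : SeqWeakLowerSemicontinuous Φ) (hΨw : SeqWeakUpperSemicontinuous Ψ) {r lam Q : ℝ}
    (hS : IsBounded {v | Φ v < r}) (hlam : 0 < lam) (hΨQ : ∀ v, Φ v < r → Ψ v ≤ Q)
    {u₀ : X} (hu₀ : Φ u₀ < r) (hJu₀ : Φ u₀ - lam * Ψ u₀ < r - lam * Q) :
    ∃ u, Φ u < r ∧ IsMinOn (fun v => Φ v - lam * Ψ v) {v | Φ v < r} u := by
  set S := {v | Φ v < r}
  set J := fun v => Φ v - lam * Ψ v
  obtain ⟨a, ha⟩ := bddBelow_image_of_isBounded hX hΦ hΦw hS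
  have hΦa : ∀ v ∈ S, a ≤ Φ v := fun v hv => ha ⟨v, hv, rfl⟩
  have hJ : BddBelow (J '' S) := ⟨a - lam * Q, by
    rintro _ ⟨v, hv, rfl⟩
    nlinarith [hΦa v hv, hΨQ v hv]⟩
  set m := sInf (J '' S)
  have hmJ : ∀ v ∈ S, m ≤ J v := fun v hv => csInf_le hJ ⟨v, hv, rfl⟩
  obtain ⟨z, -, hz, hzS⟩ :=
    exists_seq_tendsto_sInf (⟨J u₀, u₀, hu₀, rfl⟩ : (J '' S).Nonempty) hJ
  choose y hyS hyz using hzS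
  obtain ⟨C, hC⟩ := hS.exists_norm_le
  obtain ⟨u, g, hg, hyu⟩ := exists_weakSeqConv_subseq hX fun n => hC _ (hyS n)
  obtain ⟨α, -, σ, hσ, hα⟩ := tendsto_subseq_of_bounded (Metric.isBounded_Icc a r)
    (x := fun n => Φ (y (g n))) fun n => ⟨hΦa _ (hyS _), (hyS _).le⟩
  set w := y ∘ g ∘ σ
  have hwu : WeakSeqConv w u := hyu.comp_tendsto hσ.tendsto_atTop
  have hwJ : Tendsto (fun n => J (w n)) atTop (𝓝 m) :=
    (hz.comp (hg.comp hσ).tendsto_atTop).congr fun n => (hyz _).symm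
  set β := (α - m) / lam
  have hβ : Tendsto (fun n => Ψ (w n)) atTop (𝓝 β) :=
    (hα.sub hwJ).div_const lam |>.congr fun n => by field_simp; simp [w, J]
  have hΦu : Φ u ≤ α := hwu.le_of_tendsto hΦ hΦw hα
  have hΨu : β ≤ Ψ u := hβ.limsup_eq ▸ hΨw u w hwu
  have hβQ : β ≤ Q := le_of_tendsto' hβ fun n => hΨQ _ (hyS _)
  have hαr : α ≤ r := le_of_tendsto' hα fun n => (hyS _).le
  have hlamβ : lam * β = α - m := mul_div_cancel₀ _ hlam.ne'
  have hJu : J u ≤ m := by nlinarith [mul_le_mul_of_nonneg_left hΨu hlam.le]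
  refine ⟨u, ?_, isMinOn_iff.2 fun v hv => hJu.trans (hmJ v hv)⟩
  by_contra hur
  nlinarith [mul_le_mul_of_nonneg_left hβQ hlam.le, hmJ u₀ hu₀]

end DirectMethod

section RicceriVarphi

variable {X : Type} {Φ Ψ : X → ℝ} {r : ℝ}

def ricceriVarphi (Φ Ψ : X → ℝ) (r : ℝ) : ℝ :=
  sInf ((fun u => (sSup (Ψ '' {v | Φ v < r}) - Ψ u) / (r - Φ u)) '' {u | Φ u < r})

theorem ricceriVarphi_le_of_pos (h : 0 < ricceriVarphi Φ Ψ r) {u : X} (hu : Φ u < r) :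
    ricceriVarphi Φ Ψ r ≤ (sSup (Ψ '' {v | Φ v < r}) - Ψ u) / (r - Φ u) := by
  refine csInf_le ?_ ⟨u, hu, rfl⟩
  by_contra hb
  rw [ricceriVarphi, Real.sInf_of_not_bddBelow hb] at h
  exact h.false

/-- On paper `φ(r) = +∞` when `Ψ` is unbounded above on the sublevel set; here `sSup` is then
`0`, and `0 < φ(r)` forces `Ψ < 0` on that set instead. -/
theorem bddAbove_of_ricceriVarphi_pos (h : 0 < ricceriVarphi Φ Ψ r) :
    BddAbove (Ψ '' {v | Φ v < r}) := by
  by_contra hb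
  refine hb ⟨0, ?_⟩
  rintro _ ⟨u, hu, rfl⟩
  have := h.trans_le (ricceriVarphi_le_of_pos h hu)
  rw [Real.sSup_of_not_bddAbove hb, zero_sub] at this
  linarith [(div_pos_iff_of_pos_right (sub_pos.2 hu)).1 this]

theorem exists_sub_mul_lt_of_lt_inv_ricceriVarphi {lam : ℝ}
    (hlam : lam ∈ Ioo 0 (1 / ricceriVarphi Φ Ψ r)) :
    ∃ u₀, Φ u₀ < r ∧ Φ u₀ - lam * Ψ u₀ < r - lam * sSup (Ψ '' {v | Φ v < r}) := by
  have hpos : 0 < ricceriVarphi Φ Ψ r := one_div_pos.1 (hlam.1.trans hlam.2)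
  have hne : {u | Φ u < r}.Nonempty := by
    by_contra hS
    simp [ricceriVarphi, not_nonempty_iff_eq_empty.1 hS] at hpos
  obtain ⟨_, ⟨u₀, hu₀, rfl⟩, hlt⟩ :=
    exists_lt_of_csInf_lt (hne.image _) ((lt_one_div hlam.1 hpos).1 hlam.2)
  rw [div_lt_div_iff₀ (sub_pos.2 hu₀) hlam.1] at hlt
  exact ⟨u₀, hu₀, by linarith⟩

end RicceriVarphi

namespace HasGateauxDerivAt

variable {X : Type} [NormedAddCommGroup X] [NormedSpace ℝ X] {J Φ Ψ : X → ℝ}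
  {J' Φ' Ψ' : X →L[ℝ] ℝ} {u : X}

theorem hasDerivAt (h : HasGateauxDerivAt J J' u) (v : X) :
    HasDerivAt (fun t : ℝ => J (u + t • v)) (J' v) 0 := by
  rw [hasDerivAt_iff_tendsto_slope]
  simpa [slope_fun_def_field] using h v

theorem sub_const_mul (hΦ : HasGateauxDerivAt Φ Φ' u) (hΨ : HasGateauxDerivAt Ψ Ψ' u) (c : ℝ) :
    HasGateauxDerivAt (fun v => Φ v - c * Ψ v) (Φ' - c • Ψ') u := fun v =>
  ((hΦ v).sub ((hΨ v).const_mul c)).congr fun t => by ring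

theorem eq_zero_of_isLocalMin (h : HasGateauxDerivAt J J' u) (hmin : IsLocalMin J u) : J' = 0 :=
  ContinuousLinearMap.ext fun v => by
    have hmin' : IsLocalMin J (u + (0 : ℝ) • v) := by rwa [zero_smul, add_zero]
    exact (hmin'.comp_continuous (g := fun t : ℝ => u + t • v) (by fun_prop)).hasDerivAt_eq_zero
      (h.hasDerivAt v)

end HasGateauxDerivAt

theorem ricceri_local_minimum_general
    {X : Type} [NormedAddCommGroup X] [NormedSpace ℝ X]
    (hreflexive : Function.Surjective (NormedSpace.inclusionInDoubleDual ℝ X))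
    (Φ Ψ : X → ℝ) (Φ' Ψ' : X → X →L[ℝ] ℝ)
    (hΦdiff : ∀ u, HasGateauxDerivAt Φ (Φ' u) u)
    (hΨdiff : ∀ u, HasGateauxDerivAt Ψ (Ψ' u) u)
    (hΦcont : Continuous Φ)
    (hΦwlsc : ∀ (u : X) (x : ℕ → X), WeakSeqConv x u →
      Φ u ≤ atTop.liminf fun n => Φ (x n))
    (hΦcoercive : Tendsto Φ (Filter.comap norm atTop) atTop)
    (hΨwusc : ∀ (u : X) (x : ℕ → X), WeakSeqConv x u →
      (atTop.limsup fun n => Ψ (x n)) ≤ Ψ u)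
    (r : ℝ)
    (φr : ℝ)
    (hφr : φr = sInf ((fun u => (sSup (Ψ '' {v | Φ v < r}) - Ψ u) / (r - Φ u)) ''
      {u | Φ u < r}))
    (lam : ℝ) (hlam : lam ∈ Set.Ioo 0 (1 / φr)) :
    ∃ u : X, Φ u < r ∧
      (∀ v : X, Φ v < r → Φ u - lam * Ψ u ≤ Φ v - lam * Ψ v) ∧
      IsLocalMin (fun v => Φ v - lam * Ψ v) u ∧
      Φ' u = lam • Ψ' u := by
  subst hφr
  obtain ⟨u₀, hu₀, hJu₀⟩ := exists_sub_mul_lt_of_lt_inv_ricceriVarphi hlam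
  have hΨ := bddAbove_of_ricceriVarphi_pos (one_div_pos.1 (hlam.1.trans hlam.2))
  have hS : IsBounded {v | Φ v < r} := by
    rw [comap_norm_atTop] at hΦcoercive
    exact isBounded_def.2 <|
      mem_of_superset (hΦcoercive (Ici_mem_atTop r)) fun v (hv : r ≤ Φ v) => not_lt.2 hv
  obtain ⟨u, hu, hmin⟩ := exists_isMinOn_sub_mul_of_isBounded hreflexive hΦcont hΦwlsc hΨwusc
    hS hlam.1 (fun v hv => le_csSup hΨ ⟨v, hv, rfl⟩) hu₀ hJu₀
  have hloc := hmin.isLocalMin ((isOpen_lt hΦcont continuous_const).mem_nhds hu)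
  refine ⟨u, hu, isMinOn_iff.1 hmin, hloc, sub_eq_zero.1 ?_⟩
  exact ((hΦdiff u).sub_const_mul (hΨdiff u) lam).eq_zero_of_isLocalMin hloc

/-- **Ricceri-type local minimum theorem.** Let `X` be a reflexive real Banach space and
`Φ, Ψ : X → ℝ` Gâteaux differentiable functionals with `Φ` strongly continuous, sequentially
weakly lower semicontinuous and coercive, and `Ψ` sequentially weakly upper semicontinuous.
For `r > inf_X Φ` let
`φ(r) = inf_{u : Φ(u) < r} ( sup{Ψ(v) : Φ(v) < r} - Ψ(u) ) / ( r - Φ(u) )`.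
Then for every `r > inf_X Φ` and every `λ ∈ (0, 1/φ(r))`, the restriction of
`J_λ = Φ - λΨ` to `Φ⁻¹((-∞, r))` admits a global minimum, which is a critical point
(a local minimum) of `J_λ` in `X`. -/
theorem ricceri_local_minimum
    {X : Type} [NormedAddCommGroup X] [NormedSpace ℝ X] [CompleteSpace X]
    (hreflexive : Function.Surjective (NormedSpace.inclusionInDoubleDual ℝ X))
    (Φ Ψ : X → ℝ) (Φ' Ψ' : X → X →L[ℝ] ℝ)
    (hΦdiff : ∀ u, HasGateauxDerivAt Φ (Φ' u) u)
    (hΨdiff : ∀ u, HasGateauxDerivAt Ψ (Ψ' u) u)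
    (hΦcont : Continuous Φ)
    (hΦwlsc : ∀ (u : X) (x : ℕ → X), WeakSeqConv x u →
      Φ u ≤ atTop.liminf fun n => Φ (x n))
    (hΦcoercive : Tendsto Φ (Filter.comap norm atTop) atTop)
    (hΨwusc : ∀ (u : X) (x : ℕ → X), WeakSeqConv x u →
      (atTop.limsup fun n => Ψ (x n)) ≤ Ψ u)
    (r : ℝ) (hr : sInf (Set.range Φ) < r)
    (φr : ℝ)
    (hφr : φr = sInf ((fun u => (sSup (Ψ '' {v | Φ v < r}) - Ψ u) / (r - Φ u)) ''
      {u | Φ u < r}))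
    (lam : ℝ) (hlam : lam ∈ Set.Ioo 0 (1 / φr)) :
    ∃ u : X, Φ u < r ∧
      (∀ v : X, Φ v < r → Φ u - lam * Ψ u ≤ Φ v - lam * Ψ v) ∧
      IsLocalMin (fun v => Φ v - lam * Ψ v) u ∧
      Φ' u = lam • Ψ' u :=
  ricceri_local_minimum_general hreflexive Φ Ψ Φ' Ψ' hΦdiff hΨdiff hΦcont hΦwlsc hΦcoercive hΨwusc r
    φr hφr lam hlam

end
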